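/- arXiv:2407.08456 — 3 statements merged into one kernel-verified Lean document; each statement's English description precedes it below -/
import Mathlib

section
/- Let v ≠ 0 and let γ be continuous, 1-periodic, and non-constant. Let Q be the unique C¹ 1-periodic solution of Q' = v(γ₀ − γ) with ∫₀¹ Q = 0, where γ₀ = ∫₀¹ γ. Let R be C¹, 1-periodic, with ∫₀¹ R = 0 and R' = −2Q. Then the non-reciprocity coefficient N_γ := −∫₀¹ γ(y) R(y) dy equals (2/v)∫₀¹ Q(y)² dy, and in particular N_γ ≠ 0. -/
/-!
Writing `γ = γ₀ - Q' / v` and using `∫₀¹ R = 0`, the coefficient becomes `(1 / v) ∫₀¹ R Q'`.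
Integrating by parts over a period and using `R' = -2Q` turns this into `(2 / v) ∫₀¹ Q²`. That
integral is positive: otherwise the continuous periodic `Q` vanishes identically, so `Q' = 0`
and `γ` is constant.
-/

open intervalIntegral Function Set

theorem Function.Periodic.integral_mul_deriv_eq_neg_integral_deriv_mul {f g : ℝ → ℝ} {T : ℝ}
    (hf : ContDiff ℝ 1 f) (hg : ContDiff ℝ 1 g) (hfT : Periodic f T) (hgT : Periodic g T)
    (a : ℝ) : ∫ x in a..a + T, f x * deriv g x = -∫ x in a..a + T, deriv f x * g x := by
  rw [integral_mul_deriv_eq_deriv_mul (fun x _ => (hf.differentiable one_ne_zero x).hasDerivAt)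
    (fun x _ => (hg.differentiable one_ne_zero x).hasDerivAt)
    ((hf.continuous_deriv le_rfl).intervalIntegrable _ _)
    ((hg.continuous_deriv le_rfl).intervalIntegrable _ _), hfT a, hgT a]
  ring

theorem Function.Periodic.integral_sq_pos {f : ℝ → ℝ} {T : ℝ} (hf : Continuous f)
    (hfT : Periodic f T) (hT : 0 < T) (hne : ∃ t, f t ≠ 0) (a : ℝ) :
    0 < ∫ x in a..a + T, f x ^ 2 := by
  obtain ⟨t, ht⟩ := hne
  obtain ⟨y, hy, hfy⟩ := hfT.exists_mem_Ico hT t a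
  simpa using integral_lt_integral_of_continuousOn_of_le_of_exists_lt (lt_add_of_pos_right a hT)
    continuousOn_const (hf.pow 2).continuousOn (fun x _ => sq_nonneg (f x))
    ⟨y, Ico_subset_Icc_self hy, by simpa [← hfy] using sq_pos_of_ne_zero ht⟩

theorem exists_ne_zero_of_deriv_ne {f : ℝ → ℝ} {a b : ℝ} (h : deriv f a ≠ deriv f b) :
    ∃ t, f t ≠ 0 := by
  by_contra! hf
  simp [funext hf] at h

theorem nonreciprocity_coefficient_gamma_general (v : ℝ) (hv : v ≠ 0) (γ Q R : ℝ → ℝ)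
    (hγnc : ∃ a b : ℝ, γ a ≠ γ b)
    (hQ : ContDiff ℝ 1 Q) (hQper : ∀ y : ℝ, Q (y + 1) = Q y)
    (hQcell : ∀ y : ℝ, deriv Q y = v * ((∫ z in (0:ℝ)..1, γ z) - γ y))
    (hR : ContDiff ℝ 1 R) (hRper : ∀ y : ℝ, R (y + 1) = R y)
    (hRmean : ∫ y in (0:ℝ)..1, R y = 0)
    (hRcell : ∀ y : ℝ, deriv R y = -2 * Q y) :
    (-∫ y in (0:ℝ)..1, γ y * R y) = (2 / v) * ∫ y in (0:ℝ)..1, (Q y) ^ 2 ∧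
    (-∫ y in (0:ℝ)..1, γ y * R y) ≠ 0 := by
  set γ₀ := ∫ z in (0:ℝ)..1, γ z
  have hγR : ∀ y, γ y * R y = γ₀ * R y - v⁻¹ * (R y * deriv Q y) := by
    intro y
    rw [hQcell y]
    field_simp
    ring
  have hRQ' : ∫ y in (0:ℝ)..1, R y * deriv Q y = 2 * ∫ y in (0:ℝ)..1, Q y ^ 2 := by
    have hparts := Periodic.integral_mul_deriv_eq_neg_integral_deriv_mul hR hQ hRper hQper 0
    simp only [zero_add, hRcell] at hparts
    rw [hparts, ← integral_const_mul, ← intervalIntegral.integral_neg]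
    congr 1 with y
    ring
  have hN : (-∫ y in (0:ℝ)..1, γ y * R y) = (2 / v) * ∫ y in (0:ℝ)..1, Q y ^ 2 := by
    simp_rw [hγR]
    rw [integral_sub (f := fun y => γ₀ * R y) (g := fun y => v⁻¹ * (R y * deriv Q y))
      ((hR.continuous.intervalIntegrable 0 1).const_mul γ₀)
      (((hR.continuous.mul (hQ.continuous_deriv le_rfl)).intervalIntegrable 0 1).const_mul v⁻¹),
      integral_const_mul, integral_const_mul, hRmean, hRQ']
    ring
  have hQne : ∃ t, Q t ≠ 0 := by
    obtain ⟨a, b, hab⟩ := hγnc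
    refine exists_ne_zero_of_deriv_ne (a := a) (b := b) ?_
    rw [hQcell, hQcell, Ne, mul_right_inj' hv]
    exact fun h => hab (by linarith)
  have hQ2 := Periodic.integral_sq_pos hQ.continuous hQper one_pos hQne 0
  rw [zero_add] at hQ2
  exact ⟨hN, hN ▸ mul_ne_zero (div_ne_zero two_ne_zero hv) hQ2.ne'⟩

theorem nonreciprocity_coefficient_gamma (v : ℝ) (hv : v ≠ 0) (γ Q R : ℝ → ℝ)
    (hγc : Continuous γ) (hγper : ∀ y : ℝ, γ (y + 1) = γ y)
    (hγnc : ∃ a b : ℝ, γ a ≠ γ b)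
    (hQ : ContDiff ℝ 1 Q) (hQper : ∀ y : ℝ, Q (y + 1) = Q y)
    (hQmean : ∫ y in (0:ℝ)..1, Q y = 0)
    (hQcell : ∀ y : ℝ, deriv Q y = v * ((∫ z in (0:ℝ)..1, γ z) - γ y))
    (hR : ContDiff ℝ 1 R) (hRper : ∀ y : ℝ, R (y + 1) = R y)
    (hRmean : ∫ y in (0:ℝ)..1, R y = 0)
    (hRcell : ∀ y : ℝ, deriv R y = -2 * Q y) :
    (-∫ y in (0:ℝ)..1, γ y * R y) = (2 / v) * ∫ y in (0:ℝ)..1, (Q y) ^ 2 ∧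
    (-∫ y in (0:ℝ)..1, γ y * R y) ≠ 0 :=
  nonreciprocity_coefficient_gamma_general v hv γ Q R hγnc hQ hQper hQcell hR hRper hRmean hRcell
end

section
/- With σ continuous, 1-periodic, strictly positive, σ₀ = (∫₀¹ 1/σ)⁻¹, and P the mean-zero 1-periodic function with σ(P'+1)=σ₀, one has ∫₀¹ P(y)/σ(y) dy = 0. -/
/-! By Rolle's theorem `P'` vanishes somewhere, so the cell equation gives `σ₀ > 0`; dividing it by
`σ₀ σ` turns `P / σ` into `P (P' + 1) / σ₀`. Over a period, `∫ P P' = [P² / 2] = 0` and `∫ P = 0`. -/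

theorem intervalIntegral.integral_mul_deriv_self_eq_zero {f : ℝ → ℝ} {a b : ℝ}
    (hf : ContDiff ℝ 1 f) (hab : f a = f b) : ∫ x in a..b, f x * deriv f x = 0 := by
  have hderiv : ∀ x ∈ Set.uIcc a b, HasDerivAt (fun y => f y ^ 2 / 2) (f x * deriv f x) x := by
    intro x _
    refine ((((hf.differentiable one_ne_zero x).hasDerivAt).fun_pow 2).div_const 2).congr_deriv ?_
    push_cast
    ring
  have hint : IntervalIntegrable (fun x => f x * deriv f x) MeasureTheory.volume a b :=
    (hf.continuous.mul (hf.continuous_deriv le_rfl)).intervalIntegrable a b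
  rw [intervalIntegral.integral_eq_sub_of_hasDerivAt hderiv hint, hab, sub_self]

theorem integral_P_div_sigma_zero_general (σ P : ℝ → ℝ) (σ₀ : ℝ)
    (hσpos : ∀ y : ℝ, 0 < σ y)
    (hP : ContDiff ℝ 1 P) (hPper : ∀ y : ℝ, P (y + 1) = P y)
    (hPmean : ∫ y in (0:ℝ)..1, P y = 0)
    (hcell : ∀ y : ℝ, σ y * (deriv P y + 1) = σ₀) :
    ∫ y in (0:ℝ)..1, P y / σ y = 0 := by
  have hP01 : P 0 = P 1 := by simpa using (hPper 0).symm
  obtain ⟨c, -, hc⟩ := exists_deriv_eq_zero zero_lt_one hP.continuous.continuousOn hP01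
  have hσ₀ : 0 < σ₀ := by rw [← hcell c, hc, zero_add, mul_one]; exact hσpos c
  have hpointwise : ∀ y, P y / σ y = (P y * deriv P y + P y) / σ₀ := by
    intro y
    rw [eq_div_iff hσ₀.ne', ← hcell y]
    field_simp [(hσpos y).ne']
  calc ∫ y in (0:ℝ)..1, P y / σ y
      = ((∫ y in (0:ℝ)..1, P y * deriv P y) + ∫ y in (0:ℝ)..1, P y) / σ₀ := by
        simp only [hpointwise, intervalIntegral.integral_div]
        rw [intervalIntegral.integral_add (f := fun y => P y * deriv P y)
          ((hP.continuous.mul (hP.continuous_deriv le_rfl)).intervalIntegrable 0 1)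
          (hP.continuous.intervalIntegrable 0 1)]
    _ = 0 := by
        rw [intervalIntegral.integral_mul_deriv_self_eq_zero hP hP01, hPmean, add_zero, zero_div]

theorem integral_P_div_sigma_zero (σ P : ℝ → ℝ) (σ₀ : ℝ)
    (hσc : Continuous σ) (hσper : ∀ y : ℝ, σ (y + 1) = σ y)
    (hσpos : ∀ y : ℝ, 0 < σ y)
    (hσ₀ : σ₀ = (∫ y in (0:ℝ)..1, 1 / σ y)⁻¹)
    (hP : ContDiff ℝ 1 P) (hPper : ∀ y : ℝ, P (y + 1) = P y)
    (hPmean : ∫ y in (0:ℝ)..1, P y = 0)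
    (hcell : ∀ y : ℝ, σ y * (deriv P y + 1) = σ₀) :
    ∫ y in (0:ℝ)..1, P y / σ y = 0 :=
  integral_P_div_sigma_zero_general σ P σ₀ hσpos hP hPper hPmean hcell
end

section
/- Let σ, γ be continuous, 1-periodic, strictly positive, with P the mean-zero corrector for σ (σ(P'+1)=σ₀ constant) and Q the mean-zero 1-periodic C¹ solution of the cell problem ∂_y[σQ' + vγ] = 0 with σQ'+vγ continuous. Then the integration-by-parts identity ∫₀¹ σ(y)Q'(y) dy = v∫₀¹ γ(y)P'(y) dy holds. In particular, if γ is constant (so Q ≡ 0) or σ is constant (so P ≡ 0), the convective coefficient W₀ := ∫₀¹ σQ' dy vanishes. -/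
/-!
Subtracting `P'` times the cell equation `σ Q' + v γ = K` from `Q'` times the cell
equation `σ (P' + 1) = σ₀` gives the pointwise identity `σ Q' = σ₀ Q' - K P' + v γ P'`.
By periodicity `P'` and `Q'` have mean zero over a period, so integrating leaves
`∫ σ Q' = v ∫ γ P'`. If `γ` is constant the right-hand side is a multiple of `∫ P' = 0`;
if `σ` is constant the left-hand side is a multiple of `∫ Q' = 0`.
-/

open intervalIntegral

theorem Function.Periodic.intervalIntegral_deriv_eq_zero {E : Type*} [NormedAddCommGroup E]
    [NormedSpace ℝ E] [CompleteSpace E] {f : ℝ → E} {T : ℝ} (hf : ContDiff ℝ 1 f)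
    (hper : Function.Periodic f T) (a : ℝ) : ∫ y in a..a + T, deriv f y = 0 := by
  rw [integral_deriv_eq_sub (fun x _ => (hf.differentiable one_ne_zero).differentiableAt)
    ((hf.continuous_deriv le_rfl).intervalIntegrable _ _), hper a, sub_self]

theorem integral_mul_deriv_eq_of_cell_equations {σ γ P Q : ℝ → ℝ} {σ₀ v K a b : ℝ}
    (hγ : Continuous γ) (hP' : Continuous (deriv P)) (hQ' : Continuous (deriv Q))
    (hPint : ∫ y in a..b, deriv P y = 0) (hQint : ∫ y in a..b, deriv Q y = 0)
    (hPcell : ∀ y, σ y * (deriv P y + 1) = σ₀)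
    (hQcell : ∀ y, σ y * deriv Q y + v * γ y = K) :
    ∫ y in a..b, σ y * deriv Q y = v * ∫ y in a..b, γ y * deriv P y := by
  have hpointwise (y : ℝ) :
      σ y * deriv Q y = σ₀ * deriv Q y - K * deriv P y + v * (γ y * deriv P y) := by
    linear_combination deriv Q y * hPcell y - deriv P y * hQcell y
  have iQ : IntervalIntegrable (fun y => σ₀ * deriv Q y) MeasureTheory.volume a b :=
    (continuous_const.mul hQ').intervalIntegrable a b
  have iP : IntervalIntegrable (fun y => K * deriv P y) MeasureTheory.volume a b :=
    (continuous_const.mul hP').intervalIntegrable a b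
  have iγP : IntervalIntegrable (fun y => v * (γ y * deriv P y)) MeasureTheory.volume a b :=
    (continuous_const.mul (hγ.mul hP')).intervalIntegrable a b
  rw [integral_congr fun y _ => hpointwise y, integral_add (iQ.sub iP) iγP, integral_sub iQ iP,
    integral_const_mul, integral_const_mul, integral_const_mul, hQint, hPint]
  ring

theorem convective_coefficient_identity_general (v : ℝ) (σ γ P Q : ℝ → ℝ) (σ₀ : ℝ)
    (hγc : Continuous γ)
    (hP : ContDiff ℝ 1 P) (hPper : ∀ y : ℝ, P (y + 1) = P y)
    (hPcell : ∀ y : ℝ, σ y * (deriv P y + 1) = σ₀)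
    (hQ : ContDiff ℝ 1 Q) (hQper : ∀ y : ℝ, Q (y + 1) = Q y)
    (hQcell : ∃ K : ℝ, ∀ y : ℝ, σ y * deriv Q y + v * γ y = K) :
    (∫ y in (0:ℝ)..1, σ y * deriv Q y) = v * ∫ y in (0:ℝ)..1, γ y * deriv P y ∧
    ((∀ y z : ℝ, γ y = γ z) → (∫ y in (0:ℝ)..1, σ y * deriv Q y) = 0) ∧
    ((∀ y z : ℝ, σ y = σ z) → (∫ y in (0:ℝ)..1, σ y * deriv Q y) = 0) := by
  obtain ⟨K, hK⟩ := hQcell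
  have hPint : ∫ y in (0:ℝ)..1, deriv P y = 0 := by
    simpa using Function.Periodic.intervalIntegral_deriv_eq_zero hP hPper 0
  have hQint : ∫ y in (0:ℝ)..1, deriv Q y = 0 := by
    simpa using Function.Periodic.intervalIntegral_deriv_eq_zero hQ hQper 0
  have hmain := integral_mul_deriv_eq_of_cell_equations hγc (hP.continuous_deriv le_rfl)
    (hQ.continuous_deriv le_rfl) hPint hQint hPcell hK
  refine ⟨hmain, fun hγconst => ?_, fun hσconst => ?_⟩
  · rw [hmain, integral_congr fun y _ => by rw [hγconst y 0], integral_const_mul, hPint]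
    ring
  · rw [integral_congr fun y _ => by rw [hσconst y 0], integral_const_mul, hQint, mul_zero]

theorem convective_coefficient_identity (v : ℝ) (σ γ P Q : ℝ → ℝ) (σ₀ : ℝ)
    (hσc : Continuous σ) (hσper : ∀ y : ℝ, σ (y + 1) = σ y) (hσpos : ∀ y : ℝ, 0 < σ y)
    (hγc : Continuous γ) (hγper : ∀ y : ℝ, γ (y + 1) = γ y) (hγpos : ∀ y : ℝ, 0 < γ y)
    (hP : ContDiff ℝ 1 P) (hPper : ∀ y : ℝ, P (y + 1) = P y)
    (hPmean : ∫ y in (0:ℝ)..1, P y = 0)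
    (hPcell : ∀ y : ℝ, σ y * (deriv P y + 1) = σ₀)
    (hQ : ContDiff ℝ 1 Q) (hQper : ∀ y : ℝ, Q (y + 1) = Q y)
    (hQmean : ∫ y in (0:ℝ)..1, Q y = 0)
    (hQcell : ∃ K : ℝ, ∀ y : ℝ, σ y * deriv Q y + v * γ y = K) :
    (∫ y in (0:ℝ)..1, σ y * deriv Q y) = v * ∫ y in (0:ℝ)..1, γ y * deriv P y ∧
    ((∀ y z : ℝ, γ y = γ z) → (∫ y in (0:ℝ)..1, σ y * deriv Q y) = 0) ∧
    ((∀ y z : ℝ, σ y = σ z) → (∫ y in (0:ℝ)..1, σ y * deriv Q y) = 0) :=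
  convective_coefficient_identity_general v σ γ P Q σ₀ hγc hP hPper hPcell hQ hQper hQcell
end
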